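/- arXiv:2512.07572 — 5 statements merged into one kernel-verified Lean document; each statement's English description precedes it below -/
import Mathlib

section
/- For a finite-dimensional complex vector space V, d ≥ 1, and φ ∈ Sym^d V, let A(φ) := {ℓ ∈ V* : ℓ ∘ φ = 0} and M(φ) := A(φ)^⊥ ⊆ V. Then φ ∈ Sym^d M(φ). -/
open MvPolynomial

/-- The contraction action `ℓ ∘ φ = Σ_i ℓ_i ∂φ/∂X_i` of a linear form `ℓ ∈ V*` on `Sym V`. -/
noncomputable def contractL (n : ℕ) (ℓ : Fin (n + 1) → ℂ) :
    MvPolynomial (Fin (n + 1)) ℂ →ₗ[ℂ] MvPolynomial (Fin (n + 1)) ℂ :=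
  ∑ i, ℓ i • (pderiv i).toLinearMap

/-- Membership in `Sym^d W` for a subspace `W ⊆ V` of linear forms. -/
def symPowMem (n d : ℕ) (W : Submodule ℂ (MvPolynomial (Fin (n + 1)) ℂ))
    (φ : MvPolynomial (Fin (n + 1)) ℂ) : Prop :=
  φ ∈ Algebra.adjoin ℂ (W : Set (MvPolynomial (Fin (n + 1)) ℂ)) ∧ φ.IsHomogeneous d

/-- `A(φ) = {ℓ ∈ V* : ℓ ∘ φ = 0}`. -/
def Aphi (n : ℕ) (φ : MvPolynomial (Fin (n + 1)) ℂ) : Set (Fin (n + 1) → ℂ) :=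
  {ℓ | contractL n ℓ φ = 0}

/-- `M(φ) = A(φ)^⊥ ⊆ V`: the subspace of linear forms annihilated (under contraction) by
every element of `A(φ)`. -/
noncomputable def Mphi (n : ℕ) (φ : MvPolynomial (Fin (n + 1)) ℂ) :
    Submodule ℂ (MvPolynomial (Fin (n + 1)) ℂ) :=
  homogeneousSubmodule (Fin (n + 1)) ℂ 1 ⊓
    ⨅ ℓ ∈ Aphi n φ, LinearMap.ker (contractL n ℓ)

/-!
Induction on the degree, through Euler's identity `(d + 1) • φ = ∑ᵢ Xᵢ ∂ᵢφ`. The coordinates `Xᵢ`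
there can be traded for linear forms in `M(φ)`: if `P` is an endomorphism of `V*` with kernel
`A(φ)` and `(P ℓ) ∘ φ = ℓ ∘ φ`, then `Lⱼ = ∑ᵢ P(eᵢ)ⱼ Xᵢ` lies in `M(φ)` and
`∑ⱼ Lⱼ ∂ⱼφ = ∑ᵢ Xᵢ ∂ᵢφ`. As contraction commutes with `∂ⱼ`, `A(φ) ⊆ A(∂ⱼφ)`, so
`M(∂ⱼφ) ⊆ M(φ)` and the induction hypothesis applies to every `∂ⱼφ`.
-/

namespace MvPolynomial

theorem pderiv_pderiv_comm {R σ : Type*} [CommRing R] (i j : σ) (p : MvPolynomial σ R) :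
    pderiv i (pderiv j p) = pderiv j (pderiv i p) := by
  classical
  have : ⁅pderiv i, pderiv j⁆ = (0 : Derivation R (MvPolynomial σ R) (MvPolynomial σ R)) :=
    derivation_ext fun k => by
      rw [Derivation.commutator_apply, pderiv_X, pderiv_X]
      simp only [Pi.single_apply]
      split_ifs <;> simp
  rw [← sub_eq_zero, ← Derivation.commutator_apply, this, Derivation.zero_apply]

end MvPolynomial

theorem LinearMap.exists_comp_eq_self_and_ker_eq {K V W : Type*} [DivisionRing K]
    [AddCommGroup V] [Module K V] [AddCommGroup W] [Module K W] (f : V →ₗ[K] W) :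
    ∃ P : V →ₗ[K] V, f ∘ₗ P = f ∧ LinearMap.ker P = LinearMap.ker f := by
  obtain ⟨U, hU⟩ := (LinearMap.ker f).exists_isCompl
  refine ⟨U.projection _ hU.symm, LinearMap.ext fun x => ?_, Submodule.ker_projection _⟩
  have := Submodule.sub_projection_mem hU.symm x
  rw [LinearMap.mem_ker, map_sub, sub_eq_zero] at this
  exact this.symm

section Contraction

variable {n : ℕ}

theorem contractL_apply (ℓ : Fin (n + 1) → ℂ) (ψ : MvPolynomial (Fin (n + 1)) ℂ) :
    contractL n ℓ ψ = ∑ i, ℓ i • pderiv i ψ := by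
  simp [contractL]

theorem contractL_pderiv (ℓ : Fin (n + 1) → ℂ) (j : Fin (n + 1))
    (ψ : MvPolynomial (Fin (n + 1)) ℂ) :
    contractL n ℓ (pderiv j ψ) = pderiv j (contractL n ℓ ψ) := by
  simp [contractL_apply, pderiv_pderiv_comm]

theorem contractL_sum_smul_X (ℓ v : Fin (n + 1) → ℂ) :
    contractL n ℓ (∑ i, v i • X i) = C (ℓ ⬝ᵥ v) := by
  simp [contractL_apply, pderiv_X, dotProduct, Pi.single_apply, smul_eq_C_mul, mul_comm]

theorem Aphi_subset_Aphi_pderiv (φ : MvPolynomial (Fin (n + 1)) ℂ) (j : Fin (n + 1)) :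
    Aphi n φ ⊆ Aphi n (pderiv j φ) := fun ℓ (hℓ : contractL n ℓ φ = 0) =>
  show contractL n ℓ (pderiv j φ) = 0 by rw [contractL_pderiv, hℓ, map_zero]

theorem Mphi_pderiv_le (φ : MvPolynomial (Fin (n + 1)) ℂ) (j : Fin (n + 1)) :
    Mphi n (pderiv j φ) ≤ Mphi n φ :=
  inf_le_inf_left _ <| le_iInf₂ fun ℓ hℓ => iInf₂_le ℓ (Aphi_subset_Aphi_pderiv φ j hℓ)

theorem sum_smul_X_mem_Mphi {φ : MvPolynomial (Fin (n + 1)) ℂ} {v : Fin (n + 1) → ℂ}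
    (hv : ∀ ℓ ∈ Aphi n φ, ℓ ⬝ᵥ v = 0) : ∑ i, v i • X i ∈ Mphi n φ := by
  refine Submodule.mem_inf.mpr ⟨?_, ?_⟩
  · exact Submodule.sum_mem _ fun i _ => Submodule.smul_mem _ _ (isHomogeneous_X ℂ i)
  · simp only [Submodule.mem_iInf, LinearMap.mem_ker, contractL_sum_smul_X]
    intro ℓ hℓ
    rw [hv ℓ hℓ, map_zero]

theorem exists_mem_Mphi_sum_mul_pderiv_eq (φ : MvPolynomial (Fin (n + 1)) ℂ) :
    ∃ L : Fin (n + 1) → MvPolynomial (Fin (n + 1)) ℂ, (∀ j, L j ∈ Mphi n φ) ∧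
      ∑ j, L j * pderiv j φ = ∑ i, X i * pderiv i φ := by
  set B := Fintype.linearCombination ℂ fun i => pderiv i φ
  obtain ⟨P, hBP, hker⟩ := B.exists_comp_eq_self_and_ker_eq
  refine ⟨fun j => ∑ i, P (Pi.single i 1) j • X i,
    fun j => sum_smul_X_mem_Mphi fun ℓ hℓ => ?_, ?_⟩
  · have hPℓ : P ℓ = 0 := by
      rw [← LinearMap.mem_ker, hker, LinearMap.mem_ker, Fintype.linearCombination_apply,
        ← contractL_apply]
      exact hℓ
    have hrow : (fun i => P (Pi.single i 1) j) ⬝ᵥ ℓ = P ℓ j :=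
      congr_fun (LinearMap.toMatrix'_mulVec P ℓ) j
    rw [dotProduct_comm, hrow, hPℓ, Pi.zero_apply]
  · calc ∑ j, (∑ i, P (Pi.single i 1) j • X i) * pderiv j φ
        = ∑ i, X i * B (P (Pi.single i 1)) := by
          simp only [B, Fintype.linearCombination_apply, Finset.sum_mul, Finset.mul_sum,
            smul_mul_assoc, mul_smul_comm]
          exact Finset.sum_comm
      _ = ∑ i, X i * B (Pi.single i 1) := by simp only [← LinearMap.comp_apply, hBP]
      _ = ∑ i, X i * pderiv i φ := by
          simp only [B, Fintype.linearCombination_apply_single, one_smul]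

theorem mem_adjoin_Mphi {d : ℕ} {φ : MvPolynomial (Fin (n + 1)) ℂ} (hφ : φ.IsHomogeneous d) :
    φ ∈ Algebra.adjoin ℂ (Mphi n φ : Set (MvPolynomial (Fin (n + 1)) ℂ)) := by
  induction d generalizing φ with
  | zero =>
    rw [totalDegree_eq_zero_iff_eq_C.mp (Nat.le_zero.mp hφ.totalDegree_le)]
    exact Subalgebra.algebraMap_mem _ _
  | succ d ih =>
    obtain ⟨L, hLM, hL⟩ := exists_mem_Mphi_sum_mul_pderiv_eq φ
    have hφ_eq : φ = ((d + 1 : ℕ) : ℂ)⁻¹ • ∑ j, L j * pderiv j φ := by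
      rw [hL, hφ.sum_X_mul_pderiv, ← Nat.cast_smul_eq_nsmul ℂ, smul_smul,
        inv_mul_cancel₀ (Nat.cast_ne_zero.mpr d.succ_ne_zero), one_smul]
    have hpderiv : ∀ j, pderiv j φ ∈ Algebra.adjoin ℂ (Mphi n φ : Set _) := fun j =>
      Algebra.adjoin_mono (Mphi_pderiv_le φ j) (ih (hφ.pderiv (i := j)))
    have hsum : ∑ j, L j * pderiv j φ ∈ Algebra.adjoin ℂ (Mphi n φ : Set _) :=
      Subalgebra.sum_mem _ fun j _ =>
        Subalgebra.mul_mem _ (Algebra.subset_adjoin (hLM j)) (hpderiv j)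
    have hmem := Subalgebra.smul_mem _ hsum ((d + 1 : ℕ) : ℂ)⁻¹
    rwa [← hφ_eq] at hmem

end Contraction

theorem stmt1_general (n d : ℕ) (φ : MvPolynomial (Fin (n + 1)) ℂ)
    (hφ : φ.IsHomogeneous d) :
    symPowMem n d (Mphi n φ) φ :=
  ⟨mem_adjoin_Mphi hφ, hφ⟩

/-- `φ ∈ Sym^d M(φ)`. -/
theorem stmt1 (n d : ℕ) (hd : 1 ≤ d) (φ : MvPolynomial (Fin (n + 1)) ℂ)
    (hφ : φ.IsHomogeneous d) :
    symPowMem n d (Mphi n φ) φ :=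
  stmt1_general n d φ hφ
end

section
/- For a finite-dimensional complex vector space V, a multidegree d = (d_1,…,d_s) with each d_i ≥ 1, and a tuple φ = (φ_1,…,φ_s) with φ_i ∈ Sym^{d_i} V, the subspace M(φ) := A(φ)^⊥ satisfies: for every subspace W ⊆ V, (φ_i ∈ Sym^{d_i} W for all i) if and only if M(φ) ⊆ W. -/
/-!
Write a vector of `V = K^σ` as the linear form `linearForm c = ∑ cⱼ Xⱼ`; contraction with `ℓ` is
then the directional derivative `dirDeriv ℓ`, a derivation sending `linearForm c` to the constant
`ℓ ⬝ᵥ c`. If every `φᵢ` is a polynomial in elements of `W`, each `ℓ ⊥ W` kills every `φᵢ`, so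
`W^⊥ ⊆ A(φ)` and `M(φ) = A(φ)^⊥ ⊆ W^⊥⊥ = W`.

Conversely, pass to the coordinates of a basis `w` of `K^σ` extending a basis of `span A(φ)` taken
inside `A(φ)`. The derivatives along the basis vectors in `A(φ)` become partial derivatives in the
corresponding coordinates, so in characteristic zero each `φᵢ` is a polynomial in the remaining
coordinate functions.
These are linear forms orthogonal to `A(φ)`, i.e. elements of `M(φ) ⊆ W`.
-/

open MvPolynomial

/-- `A(φ)` for a tuple `φ = (φ_1, …, φ_s)`: the linear forms apolar to every `φ_i`. -/
def AphiT (n s : ℕ) (φ : Fin s → MvPolynomial (Fin (n + 1)) ℂ) : Set (Fin (n + 1) → ℂ) :=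
  {ℓ | ∀ i, contractL n ℓ (φ i) = 0}

/-- `M(φ) = A(φ)^⊥ ⊆ V` for a tuple `φ`. -/
noncomputable def MphiT (n s : ℕ) (φ : Fin s → MvPolynomial (Fin (n + 1)) ℂ) :
    Submodule ℂ (MvPolynomial (Fin (n + 1)) ℂ) :=
  homogeneousSubmodule (Fin (n + 1)) ℂ 1 ⊓
    ⨅ ℓ ∈ AphiT n s φ, LinearMap.ker (contractL n ℓ)

open Matrix

theorem MvPolynomial.mem_supported_of_pderiv_eq_zero {R σ : Type*} [CommRing R] [NoZeroDivisors R]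
    [CharZero R] {s : Set σ} {q : MvPolynomial σ R} (h : ∀ j ∉ s, pderiv j q = 0) :
    q ∈ supported R s := by
  classical
  refine mem_supported.mpr fun j hj => by_contra fun hjs => ?_
  obtain ⟨m, hm, hjm⟩ := (mem_vars_iff_mem_support j).mp hj
  have hle : Finsupp.single j 1 ≤ m :=
    Finsupp.single_le_iff.mpr (Nat.one_le_iff_ne_zero.mpr (Finsupp.mem_support_iff.mp hjm))
  have hcoeff := coeff_pderiv (i := j) q (m - Finsupp.single j 1)
  rw [h j hjs, tsub_add_cancel_of_le hle, coeff_zero, eq_comm] at hcoeff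
  simp only [mul_eq_zero, mem_support_iff.mp hm, false_or] at hcoeff
  exact Nat.cast_add_one_ne_zero _ hcoeff

namespace MvPolynomial

variable {σ ι κ K : Type*} [Field K] [Fintype σ]

variable (σ K) in
noncomputable def linearForm : (σ → K) →ₗ[K] MvPolynomial σ K := Fintype.linearCombination K X

theorem linearForm_apply (c : σ → K) : linearForm σ K c = ∑ j, c j • X j := rfl

theorem range_linearForm : LinearMap.range (linearForm σ K) = homogeneousSubmodule σ K 1 := by
  rw [linearForm, Fintype.range_linearCombination, homogeneousSubmodule_one_eq_span_X]

/-- The pullback `q ↦ q ∘ M` of polynomial functions along the linear map `x ↦ M *ᵥ x`. -/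
noncomputable def linearSubst (M : Matrix ι σ K) : MvPolynomial ι K →ₐ[K] MvPolynomial σ K :=
  aeval fun i => linearForm σ K (M i)

@[simp]
theorem linearSubst_X (M : Matrix ι σ K) (i : ι) : linearSubst M (X i) = linearForm σ K (M i) :=
  aeval_X _ _

theorem linearSubst_mul [Fintype ι] (N : Matrix κ ι K) (M : Matrix ι σ K) :
    linearSubst (N * M) = (linearSubst M).comp (linearSubst N) := by
  refine algHom_ext fun j => ?_
  simp only [AlgHom.comp_apply, linearSubst_X, linearForm_apply, map_sum, map_smul,
    Matrix.mul_apply, Finset.sum_smul, Finset.smul_sum, smul_smul]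
  exact Finset.sum_comm

theorem linearSubst_one [DecidableEq σ] : linearSubst (1 : Matrix σ σ K) = AlgHom.id K _ := by
  refine algHom_ext fun j => ?_
  simp [linearSubst, linearForm_apply, Matrix.one_apply]

variable (σ K) in
noncomputable def dirDeriv :
    (σ → K) →ₗ[K] Derivation K (MvPolynomial σ K) (MvPolynomial σ K) :=
  Fintype.linearCombination K pderiv

theorem dirDeriv_apply (ℓ : σ → K) (p : MvPolynomial σ K) :
    dirDeriv σ K ℓ p = ∑ i, ℓ i • pderiv i p := by
  rw [dirDeriv, Fintype.linearCombination_apply, ← Derivation.coeFnAddMonoidHom_apply, map_sum,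
    Finset.sum_apply]
  rfl

@[simp]
theorem dirDeriv_single [DecidableEq σ] (j : σ) : dirDeriv σ K (Pi.single j 1) = pderiv j := by
  simp [dirDeriv]

@[simp]
theorem dirDeriv_X (ℓ : σ → K) (j : σ) : dirDeriv σ K ℓ (X j) = C (ℓ j) := by
  rw [dirDeriv_apply, Finset.sum_eq_single j (fun i _ hij => by simp [pderiv_X_of_ne hij.symm])
    (by simp)]
  simp [smul_eq_C_mul]

theorem dirDeriv_linearForm (ℓ c : σ → K) :
    dirDeriv σ K ℓ (linearForm σ K c) = C (ℓ ⬝ᵥ c) := by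
  simp [linearForm_apply, dotProduct, smul_eq_C_mul, mul_comm]

theorem dirDeriv_linearSubst [Fintype ι] (M : Matrix ι σ K) (a : σ → K)
    (q : MvPolynomial ι K) :
    dirDeriv σ K a (linearSubst M q) = linearSubst M (dirDeriv ι K (M *ᵥ a) q) := by
  induction q using MvPolynomial.induction_on with
  | C r => simp [linearSubst]
  | add p q hp hq => simp [hp, hq]
  | mul_X p i hp => simp [hp, dirDeriv_linearForm, dotProduct_comm a, Matrix.mulVec]

theorem mem_adjoin_linearForm_of_basis [Fintype ι] [CharZero K]
    (w : Module.Basis ι K (σ → K)) (T : Set ι) {ψ : MvPolynomial σ K}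
    (hψ : ∀ j ∈ T, dirDeriv σ K (w j) ψ = 0) :
    ψ ∈ Algebra.adjoin K
      (linearForm σ K '' {c | ∀ a ∈ Submodule.span K (w '' T), a ⬝ᵥ c = 0}) := by
  classical
  set M := w.toMatrix (Pi.basisFun K σ)
  set N := (Pi.basisFun K σ).toMatrix w
  have hM : ∀ x, M *ᵥ x = w.repr x := fun x => by
    have := Module.Basis.toMatrix_mulVec_repr (b := Pi.basisFun K σ) (b' := w) x
    rwa [show ⇑((Pi.basisFun K σ).repr x) = x by ext; simp] at this
  have hMN : (linearSubst M).comp (linearSubst N) = AlgHom.id K _ := by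
    rw [← linearSubst_mul, Module.Basis.toMatrix_mul_toMatrix_flip, linearSubst_one]
  have hNM : (linearSubst N).comp (linearSubst M) = AlgHom.id K _ := by
    rw [← linearSubst_mul, Module.Basis.toMatrix_mul_toMatrix_flip, linearSubst_one]
  have hinj : Function.Injective (linearSubst M) :=
    Function.LeftInverse.injective (g := linearSubst N) fun p => AlgHom.congr_fun hNM p
  have hsupp : linearSubst N ψ ∈ supported K Tᶜ := by
    refine mem_supported_of_pderiv_eq_zero fun j hj => hinj ?_
    have hwj : M *ᵥ w j = Pi.single j 1 := by
      rw [hM, w.repr_self, Finsupp.single_eq_pi_single]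
    rw [map_zero, ← dirDeriv_single, ← hwj, ← dirDeriv_linearSubst, ← AlgHom.comp_apply, hMN]
    exact hψ j (not_not.mp hj)
  have hmem : linearSubst M (linearSubst N ψ) ∈ (supported K Tᶜ).map (linearSubst M) :=
    Subalgebra.mem_map.mpr ⟨_, hsupp, rfl⟩
  rw [← AlgHom.comp_apply, hMN, AlgHom.id_apply, supported, AlgHom.map_adjoin,
    Set.image_image] at hmem
  refine Algebra.adjoin_mono ?_ hmem
  rintro _ ⟨i, hi, rfl⟩
  refine ⟨M i, fun a ha => ?_, (linearSubst_X M i).symm⟩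
  rw [dotProduct_comm, ← Matrix.mulVec, hM]
  exact Finsupp.notMem_support_iff.mp fun h => hi (w.mem_span_image.mp ha h)

theorem mem_adjoin_linearForm_of_dirDeriv_eq_zero [CharZero K] {A : Set (σ → K)}
    {ψ : MvPolynomial σ K} (hψ : ∀ a ∈ A, dirDeriv σ K a ψ = 0) :
    ψ ∈ Algebra.adjoin K (linearForm σ K '' {c | ∀ a ∈ A, a ⬝ᵥ c = 0}) := by
  classical
  obtain ⟨b, hbA, -, hAb, hb⟩ :=
    exists_linearIndepOn_id_extension (linearIndepOn_empty K id) (Set.empty_subset A)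
  let w := Module.Basis.extend hb
  let := FiniteDimensional.fintypeBasisIndex w
  have hwb : w '' {x | ↑x ∈ b} = b := by
    rw [Module.Basis.coe_extend]
    exact Subtype.coe_image_of_subset (Module.Basis.subset_extend hb)
  have key := mem_adjoin_linearForm_of_basis w {x | ↑x ∈ b}
    fun j hj => hψ _ (hbA (by simpa [w] using hj))
  rw [hwb] at key
  refine Algebra.adjoin_mono (Set.image_mono ?_) key
  exact fun c hc a ha => hc a (hAb ha)

theorem exists_dotProduct_ne_zero_of_notMem {W : Submodule K (σ → K)} {c : σ → K} (hc : c ∉ W) :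
    ∃ ℓ : σ → K, (∀ w ∈ W, ℓ ⬝ᵥ w = 0) ∧ ℓ ⬝ᵥ c ≠ 0 := by
  classical
  obtain ⟨f, hfc, hfW⟩ := Submodule.exists_dual_map_eq_bot_of_notMem hc inferInstance
  have hf : ∀ x, (dotProductEquiv K σ).symm f ⬝ᵥ x = f x := fun x =>
    congr($((dotProductEquiv K σ).apply_symm_apply f) x)
  refine ⟨(dotProductEquiv K σ).symm f, fun w hw => ?_, by rwa [hf]⟩
  rw [hf, ← Submodule.mem_bot K, ← hfW]
  exact Submodule.mem_map_of_mem hw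

theorem orthogonal_apolar_subset_of_mem_adjoin {W : Submodule K (σ → K)}
    {ψ : ι → MvPolynomial σ K} (hψ : ∀ i, ψ i ∈ Algebra.adjoin K (linearForm σ K '' W)) :
    {c | ∀ a, (∀ i, dirDeriv σ K a (ψ i) = 0) → a ⬝ᵥ c = 0} ⊆ W := by
  intro c hc
  by_contra hcW
  obtain ⟨ℓ, hℓW, hℓc⟩ := exists_dotProduct_ne_zero_of_notMem hcW
  refine hℓc (hc ℓ fun i => Derivation.eqOn_adjoin (D2 := 0) ?_ (hψ i))
  rintro _ ⟨w, hw, rfl⟩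
  simp [dirDeriv_linearForm, hℓW w hw]

end MvPolynomial

theorem contractL_eq_dirDeriv (n : ℕ) (ℓ : Fin (n + 1) → ℂ) (p : MvPolynomial (Fin (n + 1)) ℂ) :
    contractL n ℓ p = dirDeriv (Fin (n + 1)) ℂ ℓ p := by
  simp [contractL, dirDeriv_apply, LinearMap.sum_apply]

theorem mem_AphiT_iff {n s : ℕ} {φ : Fin s → MvPolynomial (Fin (n + 1)) ℂ} {a : Fin (n + 1) → ℂ} :
    a ∈ AphiT n s φ ↔ ∀ i, dirDeriv (Fin (n + 1)) ℂ a (φ i) = 0 := by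
  simp [AphiT, contractL_eq_dirDeriv]

theorem coe_MphiT (n s : ℕ) (φ : Fin s → MvPolynomial (Fin (n + 1)) ℂ) :
    (MphiT n s φ : Set (MvPolynomial (Fin (n + 1)) ℂ)) =
      linearForm (Fin (n + 1)) ℂ '' {c | ∀ a ∈ AphiT n s φ, a ⬝ᵥ c = 0} := by
  ext p
  simp only [MphiT, ← range_linearForm, Submodule.mem_inf, Submodule.mem_iInf, LinearMap.mem_ker,
    SetLike.mem_coe, LinearMap.mem_range, Set.mem_image, Set.mem_ofPred_eq]
  constructor
  · rintro ⟨⟨c, rfl⟩, hc⟩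
    exact ⟨c, fun a ha => by simpa [contractL_eq_dirDeriv, dirDeriv_linearForm] using hc a ha, rfl⟩
  · rintro ⟨c, hc, rfl⟩
    exact ⟨⟨c, rfl⟩, fun a ha => by simp [contractL_eq_dirDeriv, dirDeriv_linearForm, hc a ha]⟩

theorem stmt5_general (n s : ℕ) (d : Fin s → ℕ)
    (φ : Fin s → MvPolynomial (Fin (n + 1)) ℂ)
    (hφ : ∀ i, (φ i).IsHomogeneous (d i))
    (W : Submodule ℂ (MvPolynomial (Fin (n + 1)) ℂ))
    (hW : W ≤ homogeneousSubmodule (Fin (n + 1)) ℂ 1) :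
    (∀ i, symPowMem n (d i) W (φ i)) ↔ MphiT n s φ ≤ W := by
  constructor
  · intro h p hp
    rw [← SetLike.mem_coe, coe_MphiT] at hp
    obtain ⟨c, hc, rfl⟩ := hp
    have hW' : W = (W.comap (linearForm _ ℂ)).map (linearForm _ ℂ) :=
      (Submodule.map_comap_eq_of_le (hW.trans range_linearForm.ge)).symm
    exact orthogonal_apolar_subset_of_mem_adjoin (fun i => hW' ▸ (h i).1)
      fun a ha => hc a (mem_AphiT_iff.mpr ha)
  · intro h i
    refine ⟨Algebra.adjoin_mono ?_ (mem_adjoin_linearForm_of_dirDeriv_eq_zero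
      fun a ha => mem_AphiT_iff.mp ha i), hφ i⟩
    rw [← coe_MphiT]
    exact h

/-- for a tuple `φ` of multidegree `d`, and every subspace `W ⊆ V`:
`φ_i ∈ Sym^{d_i} W` for all `i` iff `M(φ) ⊆ W`. -/
theorem stmt5 (n s : ℕ) (d : Fin s → ℕ) (hd : ∀ i, 1 ≤ d i)
    (φ : Fin s → MvPolynomial (Fin (n + 1)) ℂ)
    (hφ : ∀ i, (φ i).IsHomogeneous (d i))
    (W : Submodule ℂ (MvPolynomial (Fin (n + 1)) ℂ))
    (hW : W ≤ homogeneousSubmodule (Fin (n + 1)) ℂ 1) :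
    (∀ i, symPowMem n (d i) W (φ i)) ↔ MphiT n s φ ≤ W :=
  stmt5_general n s d φ hφ W hW
end

section
/- Fix s ≥ 1 and degrees d_1,…,d_s each ≥ 2 with (d_1,…,d_s) ≠ (2) (i.e. not the single degree 2). Define, for 0 ≤ k ≤ r, F(k) := (r+1−k)·(n−r−k) − Σ_{i=1}^s C(d_i + r − k, r − k) + 1. Then F is concave on {0,…,r}: for every k with 1 ≤ k ≤ r−1, F(k+1) − 2·F(k) + F(k−1) ≤ 0. -/
/-- Pascal-type identity for the second difference of binomial coefficients. -/
lemma key_choose (e m : ℕ) :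
    (e + 2 + m).choose m + (e + 2 + m + 2).choose (m + 2) =
      2 * (e + 2 + m + 1).choose (m + 1) + (e + 2 + m).choose (m + 2) := by
  have h1 : (e + 2 + m + 2).choose (m + 2)
      = (e + 2 + m + 1).choose (m + 1) + (e + 2 + m + 1).choose (m + 2) :=
    Nat.choose_succ_succ' _ _ ▸ rfl
  have h2 : (e + 2 + m + 1).choose (m + 2)
      = (e + 2 + m).choose (m + 1) + (e + 2 + m).choose (m + 2) :=
    Nat.choose_succ_succ' _ _ ▸ rfl
  have h3 : (e + 2 + m + 1).choose (m + 1)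
      = (e + 2 + m).choose m + (e + 2 + m).choose (m + 1) :=
    Nat.choose_succ_succ' _ _ ▸ rfl
  omega

/-- for degrees `d_1, …, d_s` each `≥ 2` with `(d_1,…,d_s) ≠ (2)`, the function
`F(k) = (r+1−k)·(n−r−k) − Σ_i C(d_i + r − k, r − k) + 1` is concave on `{0, …, r}`:
`F(k+1) − 2·F(k) + F(k−1) ≤ 0` for `1 ≤ k ≤ r − 1`. -/
theorem stmt12 (n r s : ℕ) (hrn : r ≤ n) (hs : 1 ≤ s) (d : Fin s → ℕ)
    (hd : ∀ i, 2 ≤ d i) (hnot2 : ¬(s = 1 ∧ ∀ i, d i = 2))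
    (F : ℕ → ℤ)
    (hF : ∀ k, F k = ((r : ℤ) + 1 - k) * ((n : ℤ) - r - k) -
      (∑ i, ((d i + r - k).choose (r - k) : ℤ)) + 1)
    (k : ℕ) (hk1 : 1 ≤ k) (hkr : k + 1 ≤ r) :
    F (k + 1) - 2 * F k + F (k - 1) ≤ 0 := by
  obtain ⟨j, rfl⟩ : ∃ j, k = j + 1 := ⟨k - 1, by omega⟩
  obtain ⟨m, rfl⟩ : ∃ m, r = (j + 1) + m + 1 := ⟨r - (j + 1) - 1, by omega⟩
  rw [hF, hF, hF]
  have e1 : ∀ i : Fin s, (d i + ((j+1) + m + 1) - ((j+1) + 1)).choose (((j+1)+m+1) - ((j+1)+1))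
      = (d i + m).choose m := by
    intro i
    rw [show d i + ((j+1) + m + 1) - ((j+1) + 1) = d i + m from by omega,
        show ((j+1)+m+1) - ((j+1)+1) = m from by omega]
  have e2 : ∀ i : Fin s, (d i + ((j+1) + m + 1) - (j+1)).choose (((j+1)+m+1) - (j+1))
      = (d i + m + 1).choose (m + 1) := by
    intro i
    rw [show d i + ((j+1) + m + 1) - (j+1) = d i + m + 1 from by omega,
        show ((j+1)+m+1) - (j+1) = m + 1 from by omega]
  have e3 : ∀ i : Fin s, (d i + ((j+1) + m + 1) - ((j+1) - 1)).choose (((j+1)+m+1) - ((j+1)-1))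
      = (d i + m + 2).choose (m + 2) := by
    intro i
    rw [show d i + ((j+1) + m + 1) - ((j+1) - 1) = d i + m + 2 from by omega,
        show ((j+1)+m+1) - ((j+1)-1) = m + 2 from by omega]
  simp only [e1, e2, e3]
  -- key identity on the sums
  have hkeyN : (∑ i, (d i + m).choose m) + (∑ i, (d i + m + 2).choose (m + 2))
      = 2 * (∑ i, (d i + m + 1).choose (m + 1)) + ∑ i, (d i + m).choose (m + 2) := by
    rw [← Finset.sum_add_distrib, Finset.mul_sum, ← Finset.sum_add_distrib]
    refine Finset.sum_congr rfl fun i _ => ?_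
    obtain ⟨e, he⟩ : ∃ e, d i = e + 2 := ⟨d i - 2, by have := hd i; omega⟩
    rw [he]
    exact key_choose e m
  -- lower bound on the extra term
  have hT : 2 ≤ ∑ i, (d i + m).choose (m + 2) := by
    have hpos : ∀ i : Fin s, 1 ≤ (d i + m).choose (m + 2) := fun i =>
      Nat.choose_pos (by have := hd i; omega)
    rcases Nat.lt_or_ge s 2 with hs2 | hs2
    · -- s = 1, so some d i ≥ 3
      have hs1 : s = 1 := by omega
      have : ∃ i : Fin s, 3 ≤ d i := by
        by_contra h
        push_neg at h
        exact hnot2 ⟨hs1, fun i => by have := hd i; have := h i; omega⟩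
      obtain ⟨i, hi⟩ := this
      have h1 : 2 ≤ (d i + m).choose (m + 2) := by
        calc 2 ≤ m + 3 := by omega
        _ = (m + 3).choose (m + 2) := by
              rw [show m + 3 = (m + 2) + 1 from rfl, Nat.choose_succ_self_right]
        _ ≤ (d i + m).choose (m + 2) := Nat.choose_le_choose _ (by omega)
      calc 2 ≤ (d i + m).choose (m + 2) := h1
      _ ≤ ∑ i, (d i + m).choose (m + 2) :=
        Finset.single_le_sum (f := fun i => (d i + m).choose (m + 2))
          (fun i _ => Nat.zero_le _) (Finset.mem_univ i)
    · -- s ≥ 2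
      calc 2 ≤ s := hs2
      _ = ∑ _i : Fin s, 1 := by simp
      _ ≤ ∑ i, (d i + m).choose (m + 2) :=
        Finset.sum_le_sum fun i _ => hpos i
  have hkeyZ : (∑ i, ((d i + m).choose m : ℤ)) + (∑ i, ((d i + m + 2).choose (m + 2) : ℤ))
      = 2 * (∑ i, ((d i + m + 1).choose (m + 1) : ℤ)) + ∑ i, ((d i + m).choose (m + 2) : ℤ) := by
    exact_mod_cast congrArg (Nat.cast (R := ℤ)) hkeyN
  have hTZ : (2 : ℤ) ≤ ∑ i, ((d i + m).choose (m + 2) : ℤ) := by exact_mod_cast hT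
  push_cast
  linarith [hkeyZ, hTZ]
end

section
/- Let n, r, s be natural numbers, d = (d_1,…,d_s) with each d_i ≥ 2, δ := (r+1)(n−r) − Σ_i C(d_i + r, r), δ_ := min(δ, n − 2r − s), and assume δ_ ≥ 0. Then for every k with 0 ≤ k ≤ r, (r+1−k)·(n−r−k) − Σ_i C(d_i + r − k, r − k) + 1 > δ_. -/
private lemma chain_le (H : ℕ → ℤ) (a b : ℕ) (hab : a ≤ b)
    (hst : ∀ i, a ≤ i → i < b → H i ≤ H (i+1)) : H a ≤ H b := by
  induction hab with
  | refl => exact le_refl _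
  | @step m h ih =>
    have h1 : H a ≤ H m := ih (fun i hi hi2 => hst i hi (by omega))
    exact le_trans h1 (hst m h (by omega))

private lemma chain_ge (H : ℕ → ℤ) (a b : ℕ) (hab : a ≤ b)
    (hst : ∀ i, a ≤ i → i < b → H (i+1) ≤ H i) : H b ≤ H a := by
  have := chain_le (fun n => -H n) a b hab (fun i hi hi2 => by simpa using hst i hi hi2)
  simpa using this

private lemma concave_min (H : ℕ → ℤ) (r : ℕ)
    (hcon : ∀ m, H (m+2) - H (m+1) ≤ H (m+1) - H m) :
    ∀ m, m ≤ r → min (H 0) (H r) ≤ H m := by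
  have hD : ∀ i j, i ≤ j → H (j+1) - H j ≤ H (i+1) - H i := by
    intro i j hij
    induction hij with
    | refl => exact le_refl _
    | @step m h ih => exact le_trans (hcon m) ih
  intro m hm
  by_cases hposall : ∀ j, j < m → H j ≤ H (j+1)
  · exact le_trans (min_le_left _ _)
      (chain_le H 0 m (Nat.zero_le m) (fun i _ hi => hposall i hi))
  · push_neg at hposall
    obtain ⟨j, hj, hneg⟩ := hposall
    refine le_trans (min_le_right _ _) ?_
    refine chain_ge H m r hm (fun i hi _ => ?_)
    have := hD j i (by omega)
    omega

/-- the key combinatorial inequality, eq. (2.9) of Debarre–Manivel: with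
`δ = (r+1)(n−r) − Σ_i C(d_i + r, r)` and `δ_ = min(δ, n − 2r − s) ≥ 0`, for every
`0 ≤ k ≤ r`: `(r+1−k)·(n−r−k) − Σ_i C(d_i + r − k, r − k) + 1 > δ_`. -/
theorem stmt15 (n r s : ℕ) (d : Fin s → ℕ) (hd : ∀ i, 2 ≤ d i)
    (δ δ' : ℤ)
    (hδ : δ = ((r : ℤ) + 1) * ((n : ℤ) - r) - ∑ i, ((d i + r).choose r : ℤ))
    (hδ' : δ' = min δ ((n : ℤ) - 2 * r - s)) (hpos : 0 ≤ δ')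
    (k : ℕ) (hk : k ≤ r) :
    δ' < ((r : ℤ) + 1 - k) * ((n : ℤ) - r - k) -
      (∑ i, ((d i + r - k).choose (r - k) : ℤ)) + 1 := by
  set H : ℕ → ℤ := fun m => ((m:ℤ)+1)*((n:ℤ) - 2*r + m) - ∑ i, ((d i + m).choose m : ℤ)
    with hH
  have hn : (2*(r:ℤ) + s) ≤ n := by
    have h1 : δ' ≤ (n:ℤ) - 2*r - s := by rw [hδ']; exact min_le_right _ _
    linarith
  have pascalsum : ∀ m j : ℕ, (∑ i, ((d i + (m+1)).choose (j+1) : ℤ)) =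
      (∑ i, ((d i + m).choose j : ℤ)) + ∑ i, ((d i + m).choose (j+1) : ℤ) := by
    intro m j
    rw [← Finset.sum_add_distrib]
    refine Finset.sum_congr rfl fun i _ => ?_
    rw [show d i + (m+1) = (d i + m) + 1 from rfl, Nat.choose_succ_succ]
    push_cast; ring
  have hstep : ∀ m, H (m+1) - H m =
      ((n:ℤ) - 2*r + 2*m + 2) - ∑ i, ((d i + m).choose (m+1) : ℤ) := by
    intro m
    simp only [hH]
    rw [pascalsum m m]
    push_cast; ring
  have h0 : H 0 = (n:ℤ) - 2*r - s := by
    simp only [hH]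
    simp [Nat.choose_zero_right]
  have hr : H r = δ := by
    simp only [hH, hδ]; ring
  have key : ∀ m, m ≤ r → δ' ≤ H m := by
    have hcase : (∀ m, H (m+2) - H (m+1) ≤ H (m+1) - H m) ∨ (∀ m, H m ≤ H (m+1)) := by
      by_cases hA : s ≤ 1 ∧ ∀ i, d i = 2
      · -- monotone case
        obtain ⟨hs1, hd2⟩ := hA
        right
        intro m
        have hsum : (∑ i, ((d i + m).choose (m+1) : ℤ)) = (s:ℤ) * (m+2) := by
          have : ∀ i : Fin s, ((d i + m).choose (m+1) : ℤ) = ((m:ℤ)+2) := by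
            intro i
            rw [hd2 i, show 2 + m = (m+1) + 1 by omega, Nat.choose_succ_self_right]
            push_cast; ring
          rw [Finset.sum_congr rfl (fun i _ => this i)]
          simp [Finset.sum_const, mul_comm]
        have h2 := hstep m
        rw [hsum] at h2
        have hs1' : (s:ℤ) ≤ 1 := by exact_mod_cast hs1
        have hm0 : (0:ℤ) ≤ (m:ℤ) := by positivity
        nlinarith
      · -- concave case
        left
        have hbig : ∀ m : ℕ, (2:ℤ) ≤ ∑ i, ((d i + m).choose (m+2) : ℤ) := by
          intro m
          rcases not_and_or.mp hA with hs | hd3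
          · -- s ≥ 2
            push_neg at hs
            have h1 : ∀ i : Fin s, (1:ℤ) ≤ ((d i + m).choose (m+2) : ℤ) := by
              intro i
              have : 0 < (d i + m).choose (m+2) := Nat.choose_pos (by have := hd i; omega)
              exact_mod_cast this
            calc (2:ℤ) ≤ (s:ℤ) := by exact_mod_cast hs
              _ = ∑ _i : Fin s, (1:ℤ) := by simp
              _ ≤ _ := Finset.sum_le_sum (fun i _ => h1 i)
          · -- some d i ≥ 3
            push_neg at hd3
            obtain ⟨i0, hi0⟩ := hd3
            have hi3 : 3 ≤ d i0 := by have := hd i0; omega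
            have hterm : (2:ℤ) ≤ ((d i0 + m).choose (m+2) : ℤ) := by
              have h1 : (m+3).choose (m+2) ≤ (d i0 + m).choose (m+2) :=
                Nat.choose_le_choose _ (by omega)
              have h2 : (m+3).choose (m+2) = m+3 := by
                rw [show m + 3 = (m+2) + 1 by omega, Nat.choose_succ_self_right]
              have : 2 ≤ (d i0 + m).choose (m+2) := by omega
              exact_mod_cast this
            refine le_trans hterm ?_
            exact Finset.single_le_sum (f := fun i => ((d i + m).choose (m+2) : ℤ))
              (fun i _ => by positivity) (Finset.mem_univ i0)
        intro m
        have e1 := hstep m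
        have e2 := hstep (m+1)
        have e3 := pascalsum m (m+1)
        have e4 := hbig m
        push_cast at e2
        linarith
    intro m hm
    have hδmin : δ' ≤ min (H 0) (H r) := by
      rw [h0, hr, hδ', min_comm]
    rcases hcase with hcon | hmono
    · exact le_trans hδmin (concave_min H r hcon m hm)
    · have h1 := chain_le H 0 m (Nat.zero_le m) (fun i _ _ => hmono i)
      have h2 : δ' ≤ H 0 := le_trans hδmin (min_le_left _ _)
      linarith
  have hgoal : δ' ≤ H (r - k) := key (r-k) (Nat.sub_le r k)
  have hd' : ∀ i : Fin s, d i + r - k = d i + (r - k) := fun i => by omega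
  have hcast : ((r - k : ℕ) : ℤ) = (r:ℤ) - k := by
    push_cast [hk]; ring
  have heq : ((r : ℤ) + 1 - k) * ((n : ℤ) - r - k) -
      (∑ i, ((d i + r - k).choose (r - k) : ℤ)) + 1 = H (r-k) + 1 := by
    simp only [hH, hd']
    rw [hcast]
    ring
  rw [heq]
  linarith
end

section
/- Let n, r, s, d = (d_1,…,d_s) with d_i ≥ 2, δ_ := min((r+1)(n−r) − Σ_i C(d_i + r, r), n − 2r − s), and assume δ_ ≥ 0. Then max over k ∈ {0,…,r} of ((r+1−k)·(n−r+k) + Σ_i C(d_i + r − k, r − k) − 1 + 2·k·(n−r)) < 2·(r+1)·(n−r) − δ_. -/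
/-!
Put `m = r - k`. The claim is equivalent to `δ_ ≤ F m`, where
`F m = (m + 1) * (n - 2r + m) - ∑ i, C(d_i + m, m)`, and this holds at both ends: `F 0 = n - 2r - s`
and `F r` is the first term of the minimum. Using `C(d + j + 1, j + 1) - C(d + j, j) = C(d + j, j + 1)`
twice, the second difference of `F` at `j` is `2 - ∑ i, C(d_i + j, j + 2)`. Each summand is at
least `1`, and at least `3` if `d_i ≥ 3`, so `F` is concave unless `s ≤ 1` and all `d_i = 2`; a
concave sequence lies above the chord between its endpoints. In the remaining case `F` is
nondecreasing, so `F m ≥ F 0`.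
-/

open Finset

theorem chord_le_of_antitone_sub {f : ℕ → ℤ} (hf : Antitone fun j => f (j + 1) - f j)
    {m r : ℕ} (hmr : m ≤ r) : ((r : ℤ) - m) * f 0 + m * f r ≤ r * f m := by
  obtain ⟨p, rfl⟩ := Nat.exists_eq_add_of_le hmr
  have hlow : (m : ℤ) * (f (m + 1) - f m) ≤ f m - f 0 := by
    rw [← sum_range_sub f m]
    simpa using card_nsmul_le_sum (range m) _ _ fun i hi => hf (by simp at hi; omega)
  have hup : f (m + p) - f m ≤ p * (f (m + 1) - f m) := by
    have htel := sum_range_sub (fun i => f (m + i)) p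
    simp only [add_zero] at htel
    rw [← htel]
    simpa [← add_assoc] using sum_le_card_nsmul (range p) _ _ fun i _ => hf (by omega)
  push_cast
  nlinarith

theorem le_of_antitone_sub {f : ℕ → ℤ} (hf : Antitone fun j => f (j + 1) - f j) {c : ℤ}
    {m r : ℕ} (hmr : m ≤ r) (h0 : c ≤ f 0) (hr : c ≤ f r) : c ≤ f m := by
  rcases Nat.eq_zero_or_pos r with rfl | hr0
  · rwa [Nat.le_zero.mp hmr]
  have hchord := chord_le_of_antitone_sub hf hmr
  have hm : (m : ℤ) ≤ r := by exact_mod_cast hmr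
  have : (r : ℤ) * c ≤ r * f m := by nlinarith
  exact le_of_mul_le_mul_left this (by exact_mod_cast hr0)

/-- The expected dimension of the Fano scheme of `m`-planes on a complete intersection of
multidegree `d` in `ℙ^(a + 2m)`. -/
def expectedFanoDim {s : ℕ} (a : ℤ) (d : Fin s → ℕ) (m : ℕ) : ℤ :=
  ((m : ℤ) + 1) * (a + m) - ∑ i, ((d i + m).choose m : ℤ)

section expectedFanoDim

variable {s : ℕ} (a : ℤ) (d : Fin s → ℕ)

theorem expectedFanoDim_zero : expectedFanoDim a d 0 = a - s := by
  simp [expectedFanoDim]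

theorem expectedFanoDim_succ_sub (j : ℕ) :
    expectedFanoDim a d (j + 1) - expectedFanoDim a d j =
      a + 2 * j + 2 - ∑ i, ((d i + j).choose (j + 1) : ℤ) := by
  simp only [expectedFanoDim, ← add_assoc, Nat.choose_succ_succ', Nat.cast_add, sum_add_distrib]
  push_cast
  ring

theorem antitone_expectedFanoDim_sub (hd : ∀ j, 2 ≤ ∑ i, (d i + j).choose (j + 2)) :
    Antitone fun j => expectedFanoDim a d (j + 1) - expectedFanoDim a d j := by
  refine antitone_nat_of_succ_le fun j => ?_
  have h2 : (2 : ℤ) ≤ ∑ i, ((d i + j).choose (j + 2) : ℤ) := by exact_mod_cast hd j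
  simp only [expectedFanoDim_succ_sub, ← add_assoc, Nat.choose_succ_succ', Nat.cast_add,
    sum_add_distrib]
  push_cast
  linarith

theorem monotone_expectedFanoDim
    (hd : ∀ j, ∑ i, ((d i + j).choose (j + 1) : ℤ) ≤ a + 2 * j + 2) :
    Monotone (expectedFanoDim a d) :=
  monotone_nat_of_le_succ fun j => by linarith [expectedFanoDim_succ_sub a d j, hd j]

variable {a d}

theorem two_le_sum_choose (hd : ∀ i, 2 ≤ d i) (hs : 2 ≤ s ∨ ∃ i, 3 ≤ d i) (j : ℕ) :
    2 ≤ ∑ i, (d i + j).choose (j + 2) := by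
  rcases hs with hs | ⟨i, hi⟩
  · calc 2 ≤ ∑ _i : Fin s, 1 := by simpa using hs
      _ ≤ _ := sum_le_sum fun i _ => Nat.choose_pos (by linarith [hd i])
  · calc 2 ≤ (j + 3).choose (j + 2) := by simp [Nat.choose_succ_self_right]
      _ ≤ (d i + j).choose (j + 2) := Nat.choose_le_choose _ (by omega)
      _ ≤ _ := single_le_sum (f := fun i => (d i + j).choose (j + 2)) (by simp) (mem_univ i)

theorem le_expectedFanoDim (hd : ∀ i, 2 ≤ d i) {c : ℤ} (hc : 0 ≤ c) (h0 : c ≤ a - s) {m r : ℕ}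
    (hmr : m ≤ r) (hr : c ≤ expectedFanoDim a d r) : c ≤ expectedFanoDim a d m := by
  rw [← expectedFanoDim_zero a d] at h0
  by_cases hs : 2 ≤ s ∨ ∃ i, 3 ≤ d i
  · exact le_of_antitone_sub (antitone_expectedFanoDim_sub a d (two_le_sum_choose hd hs))
      hmr h0 hr
  push Not at hs
  have hd2 : ∀ i, d i = 2 := fun i => le_antisymm (by linarith [hs.2 i]) (hd i)
  refine h0.trans (monotone_expectedFanoDim a d (fun j => ?_) (Nat.zero_le m))
  simp only [hd2, add_comm 2 j, Nat.choose_succ_self_right, sum_const, card_univ,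
    Fintype.card_fin, nsmul_eq_mul]
  have hs1 : (s : ℤ) ≤ 1 := by exact_mod_cast Nat.lt_succ_iff.mp hs.1
  rw [expectedFanoDim_zero] at h0
  push_cast
  nlinarith

end expectedFanoDim

/-- with `δ_ = min((r+1)(n−r) − Σ_i C(d_i + r, r), n − 2r − s) ≥ 0`, for every
`k ∈ {0, …, r}`:
`(r+1−k)·(n−r+k) + Σ_i C(d_i + r − k, r − k) − 1 + 2·k·(n−r) < 2·(r+1)·(n−r) − δ_`. -/
theorem stmt16 (n r s : ℕ) (d : Fin s → ℕ) (hd : ∀ i, 2 ≤ d i)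
    (δ' : ℤ)
    (hδ' : δ' = min (((r : ℤ) + 1) * ((n : ℤ) - r) - ∑ i, ((d i + r).choose r : ℤ))
      ((n : ℤ) - 2 * r - s))
    (hpos : 0 ≤ δ')
    (k : ℕ) (hk : k ≤ r) :
    ((r : ℤ) + 1 - k) * ((n : ℤ) - r + k) + (∑ i, ((d i + r - k).choose (r - k) : ℤ)) - 1 +
        2 * k * ((n : ℤ) - r) <
      2 * ((r : ℤ) + 1) * ((n : ℤ) - r) - δ' := by
  have hr : δ' ≤ expectedFanoDim ((n : ℤ) - 2 * r) d r := by
    rw [expectedFanoDim, hδ']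
    exact (min_le_left _ _).trans_eq (by congr 1; ring)
  have key := le_expectedFanoDim hd hpos (hδ' ▸ min_le_right _ _) (Nat.sub_le r k) hr
  rw [expectedFanoDim, Nat.cast_sub hk] at key
  have hsub : ∀ i, d i + r - k = d i + (r - k) := fun i => by omega
  simp_rw [hsub]
  linear_combination key
end
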